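/- arXiv:2101.09708 — 12 statements merged into one kernel-verified Lean document; each statement's English description precedes it below -/
import Mathlib

section
/- Let m ≥ 2 be an integer and let a be an integer with 1 ≤ a ≤ m − 1. Then a·(m² − 1) = (a−1)·m² + (m−1)·m + (m−a), each of the three digits a−1, m−1, m−a lies in [0, m−1], and one step of the three-digit Kaprekar routine applied to the number with digit multiset {a−1, m−1, m−a} yields g_m(a)·(m² − 1), where g_m(a) = a − 1 if 2a ≥ m + 1 and g_m(a) = m − a otherwise. Equivalently, (m−1) − min(a−1, m−a) = g_m(a). -/
/-!
Writing `a·(m² − 1) = (a − 1)·m² + (m − 1)·m + (m − a)` exhibits the base-`m` digits, of which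
`m − 1` is the largest. A Kaprekar step on digits with extremes `x ≤ y` yields `(y − x)·(m² − 1)`
whatever the middle digit, so here it gives the multiplier `(m − 1) − min (a − 1) (m − a)`, which
is `a − 1` or `m − a` according as `m − a ≤ a − 1`, i.e. `m + 1 ≤ 2a`.
-/

/-- The map `g_m`. -/
def kaprekarMultiplier (m a : ℕ) : ℕ :=
  if m + 1 ≤ 2 * a then a - 1 else m - a

theorem mul_sq_sub_one_eq_digits {m a : ℕ} (ha1 : 1 ≤ a) (ha2 : a ≤ m) :
    a * (m ^ 2 - 1) = (a - 1) * m ^ 2 + (m - 1) * m + (m - a) := by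
  have hsq : 1 ≤ m ^ 2 := Nat.one_le_pow _ _ (by omega)
  zify [ha1, ha2, hsq, ha1.trans ha2]
  ring

theorem kaprekar_sub_eq {x y : ℕ} (b m : ℕ) (hxy : x ≤ y) :
    (y * m ^ 2 + b * m + x) - (x * m ^ 2 + b * m + y) = (y - x) * (m ^ 2 - 1) := by
  rcases Nat.eq_zero_or_pos m with rfl | hm
  · simp [hxy]
  have hsq : 1 ≤ m ^ 2 := Nat.one_le_pow _ _ hm
  have hle : x * m ^ 2 + b * m + y ≤ y * m ^ 2 + b * m + x := by
    obtain ⟨d, rfl⟩ := Nat.exists_eq_add_of_le hxy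
    nlinarith
  zify [hle, hxy, hsq]
  ring

theorem sub_min_eq_kaprekarMultiplier {m a : ℕ} (ha1 : 1 ≤ a) (ha2 : a ≤ m) :
    (m - 1) - min (a - 1) (m - a) = kaprekarMultiplier m a := by
  unfold kaprekarMultiplier
  split_ifs <;> omega

theorem threeDigitKaprekar_step_general (m a : ℕ) (ha1 : 1 ≤ a) (ha2 : a ≤ m - 1) :
    a * (m ^ 2 - 1) = (a - 1) * m ^ 2 + (m - 1) * m + (m - a) ∧
    a - 1 ≤ m - 1 ∧ m - 1 ≤ m - 1 ∧ m - a ≤ m - 1 ∧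
    ((m - 1) * m ^ 2 + max (a - 1) (m - a) * m + min (a - 1) (m - a)) -
        (min (a - 1) (m - a) * m ^ 2 + max (a - 1) (m - a) * m + (m - 1)) =
      (if m + 1 ≤ 2 * a then a - 1 else m - a) * (m ^ 2 - 1) ∧
    (m - 1) - min (a - 1) (m - a) = (if m + 1 ≤ 2 * a then a - 1 else m - a) := by
  have ham : a ≤ m := by omega
  have hmin : min (a - 1) (m - a) ≤ m - 1 := (min_le_left _ _).trans (by omega)
  have hg := sub_min_eq_kaprekarMultiplier ha1 ham
  refine ⟨mul_sq_sub_one_eq_digits ha1 ham, by omega, le_rfl, by omega, ?_, hg⟩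
  rw [kaprekar_sub_eq _ _ hmin, hg]
  rfl

/-- For `m ≥ 2` and `1 ≤ a ≤ m-1`: the base-`m` expansion of `a*(m²-1)` has
digits `a-1, m-1, m-a`, each a valid digit, and one step of the three-digit
Kaprekar routine applied to this digit multiset (whose largest digit is `m-1`)
yields `g_m(a)*(m²-1)` where `g_m(a) = a-1` if `2a ≥ m+1` and `m-a` otherwise;
equivalently `(m-1) - min (a-1) (m-a) = g_m(a)`. -/
theorem threeDigitKaprekar_step (m a : ℕ) (hm : 2 ≤ m) (ha1 : 1 ≤ a) (ha2 : a ≤ m - 1) :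
    a * (m ^ 2 - 1) = (a - 1) * m ^ 2 + (m - 1) * m + (m - a) ∧
    a - 1 ≤ m - 1 ∧ m - 1 ≤ m - 1 ∧ m - a ≤ m - 1 ∧
    ((m - 1) * m ^ 2 + max (a - 1) (m - a) * m + min (a - 1) (m - a)) -
        (min (a - 1) (m - a) * m ^ 2 + max (a - 1) (m - a) * m + (m - 1)) =
      (if m + 1 ≤ 2 * a then a - 1 else m - a) * (m ^ 2 - 1) ∧
    (m - 1) - min (a - 1) (m - a) = (if m + 1 ≤ 2 * a then a - 1 else m - a) :=
  threeDigitKaprekar_step_general m a ha1 ha2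
end

section
/- Let m ≥ 2 be an even integer and define g_m : ℕ → ℕ by g_m(a) = a − 1 if 2a ≥ m + 1 and g_m(a) = m − a otherwise. Then for every a with 1 ≤ a ≤ m − 1, there exists t ≥ 1 with g_m^[t](a) = a if and only if a = m/2. In particular, m/2 is the unique nontrivial periodic point (a fixed point) of g_m, so the three-digit Kaprekar routine in even base m has a unique nontrivial fixed set {(m/2)·(m² − 1)} of cardinality 1. -/
/-! The potential `φ(x) = x - m/2` for `x ≥ m/2` and `φ(x) = 2(m/2 - x) + 1` for `x < m/2`
strictly decreases along every step of `g_m` that does not start at the fixed point `m/2`,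
so no other point can return to itself. -/

open Function

theorem Function.IsPeriodicPt.eq_of_potential_lt {α β : Type*} [Preorder β] {f : α → α}
    {φ : α → β} {c : α} (hc : f c = c) (hφ : ∀ x, x ≠ c → φ (f x) < φ x) {n : ℕ} {x : α}
    (hn : 0 < n) (hx : IsPeriodicPt f n x) : x = c := by
  have hle : ∀ y, φ (f y) ≤ φ y := fun y => by
    by_cases hy : y = c
    · rw [hy, hc]
    · exact (hφ y hy).le
  have hiter : ∀ k y, φ (f^[k] y) ≤ φ y := fun k => by
    induction k with
    | zero => exact fun _ => le_rfl
    | succ k ih => exact fun y => (ih (f y)).trans (hle y)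
  by_contra hxc
  obtain ⟨k, rfl⟩ := Nat.exists_eq_succ_of_ne_zero hn.ne'
  have : φ (f^[k + 1] x) < φ x := by
    rw [iterate_succ_apply]
    exact (hiter k (f x)).trans_lt (hφ x hxc)
  exact this.ne (congrArg φ hx.eq)

def kaprekarMultiplierMap (m a : ℕ) : ℕ := if m + 1 ≤ 2 * a then a - 1 else m - a

def kaprekarPotential (k x : ℕ) : ℕ := if x < k then 2 * (k - x) + 1 else x - k

theorem kaprekarMultiplierMap_half (k : ℕ) : kaprekarMultiplierMap (2 * k) k = k := by
  unfold kaprekarMultiplierMap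
  split_ifs <;> omega

theorem kaprekarPotential_kaprekarMultiplierMap_lt {k x : ℕ} (hx : x ≠ k) :
    kaprekarPotential k (kaprekarMultiplierMap (2 * k) x) < kaprekarPotential k x := by
  unfold kaprekarPotential kaprekarMultiplierMap
  split_ifs <;> omega

theorem threeDigitKaprekar_even_fixedSet_general (m : ℕ) (hme : Even m)
    (g : ℕ → ℕ) (hg : ∀ a, g a = if m + 1 ≤ 2 * a then a - 1 else m - a) :
    ∀ a : ℕ, 1 ≤ a → a ≤ m - 1 → ((∃ t : ℕ, 1 ≤ t ∧ g^[t] a = a) ↔ a = m / 2) := by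
  obtain ⟨k, rfl⟩ := even_iff_two_dvd.mp hme
  obtain rfl : g = kaprekarMultiplierMap (2 * k) := funext hg
  rw [Nat.mul_div_cancel_left k two_pos]
  intro a _ _
  constructor
  · rintro ⟨t, ht, hper⟩
    exact IsPeriodicPt.eq_of_potential_lt (kaprekarMultiplierMap_half k)
      (fun x hx => kaprekarPotential_kaprekarMultiplierMap_lt hx) ht hper
  · rintro rfl
    exact ⟨1, le_rfl, kaprekarMultiplierMap_half a⟩

/-- For even `m ≥ 2`, with `g_m(a) = a-1` if `2a ≥ m+1` and `m-a` otherwise: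
for every `1 ≤ a ≤ m-1`, `a` is periodic under `g_m` iff `a = m/2`; in
particular `m/2` is the unique nontrivial periodic (indeed fixed) point. -/
theorem threeDigitKaprekar_even_fixedSet (m : ℕ) (hm : 2 ≤ m) (hme : Even m)
    (g : ℕ → ℕ) (hg : ∀ a, g a = if m + 1 ≤ 2 * a then a - 1 else m - a) :
    ∀ a : ℕ, 1 ≤ a → a ≤ m - 1 → ((∃ t : ℕ, 1 ≤ t ∧ g^[t] a = a) ↔ a = m / 2) :=
  threeDigitKaprekar_even_fixedSet_general m hme g hg
end

section
/- Let m ≥ 3 be an odd integer and define g_m : ℕ → ℕ by g_m(a) = a − 1 if 2a ≥ m + 1 and g_m(a) = m − a otherwise. Then g_m((m−1)/2) = (m+1)/2 and g_m((m+1)/2) = (m−1)/2, and for every a with 1 ≤ a ≤ m − 1, there exists t ≥ 1 with g_m^[t](a) = a if and only if a = (m−1)/2 or a = (m+1)/2. In particular, the three-digit Kaprekar routine in odd base m has a unique nontrivial fixed set {((m−1)/2)·(m² − 1), ((m+1)/2)·(m² − 1)} of cardinality 2. -/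
/-!
Write `m = 2k + 1`. The points `k` and `k + 1` form a 2-cycle of `g_m`, and every other point
moves strictly toward the front of the ordering `k + 1, k, k + 2, k - 1, k + 3, k - 2, …`. So every
orbit falls into `{k, k + 1}`, and a periodic point, which returns to itself, must already lie
there.
-/

open Function Set

section PeriodicPoints

variable {α β : Type*} [Preorder β] [WellFoundedLT β] {f : α → α} {s : Set α} {φ : α → β}

theorem exists_iterate_mem_of_lt (hφ : ∀ x ∉ s, φ (f x) < φ x) (x : α) : ∃ j, f^[j] x ∈ s := by
  induction h : φ x using WellFoundedLT.induction generalizing x with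
  | ind v ih =>
    by_cases hx : x ∈ s
    · exact ⟨0, hx⟩
    · obtain ⟨j, hj⟩ := ih (φ (f x)) (h ▸ hφ x hx) (f x) rfl
      exact ⟨j + 1, hj⟩

theorem Function.IsPeriodicPt.mem_of_mapsTo_of_lt (hs : MapsTo f s s)
    (hφ : ∀ x ∉ s, φ (f x) < φ x) {n : ℕ} {x : α} (hx : IsPeriodicPt f n x) (hn : 0 < n) :
    x ∈ s := by
  obtain ⟨j, hj⟩ := exists_iterate_mem_of_lt hφ x
  have hle : j ≤ n * j := Nat.le_mul_of_pos_left j hn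
  have hmem : f^[n * j - j] (f^[j] x) ∈ s := hs.iterate _ hj
  rwa [← iterate_add_apply, Nat.sub_add_cancel hle, (hx.mul_const j).eq] at hmem

end PeriodicPoints

def kaprekarMap (m a : ℕ) : ℕ := if m + 1 ≤ 2 * a then a - 1 else m - a

namespace kaprekarMap

variable (k : ℕ)

theorem apply_middle : kaprekarMap (2 * k + 1) k = k + 1 := by
  unfold kaprekarMap; split_ifs <;> omega

theorem apply_middle_succ : kaprekarMap (2 * k + 1) (k + 1) = k := by
  unfold kaprekarMap; split_ifs <;> omega

theorem isPeriodicPt_middle : IsPeriodicPt (kaprekarMap (2 * k + 1)) 2 k := by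
  simp only [IsPeriodicPt, IsFixedPt, iterate_succ_apply', iterate_zero_apply, apply_middle,
    apply_middle_succ]

theorem isPeriodicPt_middle_succ : IsPeriodicPt (kaprekarMap (2 * k + 1)) 2 (k + 1) :=
  apply_middle k ▸ (isPeriodicPt_middle k).apply

theorem mapsTo_middle : MapsTo (kaprekarMap (2 * k + 1)) {k, k + 1} {k, k + 1} := by
  rintro a (rfl | rfl)
  · simp [apply_middle]
  · simp [apply_middle_succ]

/-- The position of `a` in the ordering `k + 1, k, k + 2, k - 1, k + 3, …`. -/
def rank (a : ℕ) : ℕ := if k + 1 ≤ a then 2 * (a - (k + 1)) else 2 * (k - a) + 1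

theorem rank_apply_lt {a : ℕ} (ha : a ∉ ({k, k + 1} : Set ℕ)) :
    rank k (kaprekarMap (2 * k + 1) a) < rank k a := by
  simp only [mem_insert_iff, mem_singleton_iff, not_or] at ha
  unfold rank kaprekarMap
  split_ifs <;> omega

theorem eq_or_eq_of_isPeriodicPt {n a : ℕ} (ha : IsPeriodicPt (kaprekarMap (2 * k + 1)) n a)
    (hn : 0 < n) : a = k ∨ a = k + 1 :=
  ha.mem_of_mapsTo_of_lt (mapsTo_middle k) (fun _ => rank_apply_lt k) hn

end kaprekarMap

theorem threeDigitKaprekar_odd_fixedSet_general (m : ℕ) (hmo : Odd m)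
    (g : ℕ → ℕ) (hg : ∀ a, g a = if m + 1 ≤ 2 * a then a - 1 else m - a) :
    g ((m - 1) / 2) = (m + 1) / 2 ∧ g ((m + 1) / 2) = (m - 1) / 2 ∧
    ∀ a : ℕ, 1 ≤ a → a ≤ m - 1 →
      ((∃ t : ℕ, 1 ≤ t ∧ g^[t] a = a) ↔ a = (m - 1) / 2 ∨ a = (m + 1) / 2) := by
  obtain ⟨k, rfl⟩ := hmo
  obtain rfl : g = kaprekarMap (2 * k + 1) := funext hg
  have hlow : (2 * k + 1 - 1) / 2 = k := by omega
  have hhigh : (2 * k + 1 + 1) / 2 = k + 1 := by omega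
  rw [hlow, hhigh]
  refine ⟨kaprekarMap.apply_middle k, kaprekarMap.apply_middle_succ k, fun a _ _ => ⟨?_, ?_⟩⟩
  · rintro ⟨t, ht, hper⟩
    exact kaprekarMap.eq_or_eq_of_isPeriodicPt k hper ht
  · rintro (rfl | rfl)
    · exact ⟨2, one_le_two, kaprekarMap.isPeriodicPt_middle a⟩
    · exact ⟨2, one_le_two, kaprekarMap.isPeriodicPt_middle_succ k⟩

/-- For odd `m ≥ 3`, with `g_m(a) = a-1` if `2a ≥ m+1` and `m-a` otherwise:
`g_m` swaps `(m-1)/2` and `(m+1)/2`, and for every `1 ≤ a ≤ m-1`, `a` is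
periodic under `g_m` iff `a = (m-1)/2` or `a = (m+1)/2`; so the unique
nontrivial fixed set has cardinality 2. -/
theorem threeDigitKaprekar_odd_fixedSet (m : ℕ) (hm : 3 ≤ m) (hmo : Odd m)
    (g : ℕ → ℕ) (hg : ∀ a, g a = if m + 1 ≤ 2 * a then a - 1 else m - a) :
    g ((m - 1) / 2) = (m + 1) / 2 ∧ g ((m + 1) / 2) = (m - 1) / 2 ∧
    ∀ a : ℕ, 1 ≤ a → a ≤ m - 1 →
      ((∃ t : ℕ, 1 ≤ t ∧ g^[t] a = a) ↔ a = (m - 1) / 2 ∨ a = (m + 1) / 2) :=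
  threeDigitKaprekar_odd_fixedSet_general m hmo g hg
end

section
/- Let m ≥ 2 be an even integer and define g_m : ℕ → ℕ by g_m(a) = a − 1 if 2a ≥ m + 1 and g_m(a) = m − a otherwise. Then for every a with 1 ≤ a ≤ m − 1, there exists t ≤ m/2 such that g_m^[t](a) = m/2. In particular, every three-digit number in even base m enters the fixed set within at most m/2 + 1 iterations of the Kaprekar routine. -/
/-! Above `m / 2` the map `g_m` is the predecessor, so it walks down to `m / 2` one step at a
time; below `m / 2` one step reflects `a` to `m - a`, which lies `m / 2 - a` steps above `m / 2`. -/

theorem iterate_add_eq_of_eq_pred_above {g : ℕ → ℕ} {k : ℕ} (hg : ∀ n, k < n → g n = n - 1)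
    (j : ℕ) : g^[j] (k + j) = k := by
  induction j with
  | zero => rfl
  | succ j ih => rw [Function.iterate_succ_apply, hg _ (by omega), Nat.add_succ_sub_one, ih]

theorem threeDigitKaprekar_even_maxStep_general (m : ℕ) (hme : Even m)
    (g : ℕ → ℕ) (hg : ∀ a, g a = if m + 1 ≤ 2 * a then a - 1 else m - a) :
    ∀ a : ℕ, 1 ≤ a → a ≤ m - 1 → ∃ t : ℕ, t ≤ m / 2 ∧ g^[t] a = m / 2 := by
  obtain ⟨k, rfl⟩ := hme
  have hdescend : ∀ j, g^[j] (k + j) = k :=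
    iterate_add_eq_of_eq_pred_above fun n hn => by rw [hg, if_pos (by omega)]
  intro a ha1 ha2
  rw [show (k + k) / 2 = k by omega]
  rcases le_or_gt k a with hka | hak
  · obtain ⟨j, rfl⟩ := Nat.exists_eq_add_of_le hka
    exact ⟨j, by omega, hdescend j⟩
  · have hreflect : g a = k + (k - a) := by rw [hg, if_neg (by omega)]; omega
    exact ⟨k - a + 1, by omega, by rw [Function.iterate_succ_apply, hreflect, hdescend]⟩

/-- For even `m ≥ 2`, with `g_m(a) = a-1` if `2a ≥ m+1` and `m-a` otherwise:
every `1 ≤ a ≤ m-1` reaches the fixed point `m/2` within `m/2` iterations of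
`g_m` (so every three-digit number enters the fixed set within `m/2 + 1`
iterations of the Kaprekar routine). -/
theorem threeDigitKaprekar_even_maxStep (m : ℕ) (hm : 2 ≤ m) (hme : Even m)
    (g : ℕ → ℕ) (hg : ∀ a, g a = if m + 1 ≤ 2 * a then a - 1 else m - a) :
    ∀ a : ℕ, 1 ≤ a → a ≤ m - 1 → ∃ t : ℕ, t ≤ m / 2 ∧ g^[t] a = m / 2 :=
  threeDigitKaprekar_even_maxStep_general m hme g hg
end

section
/- Let m ≥ 3 be an odd integer and define g_m : ℕ → ℕ by g_m(a) = a − 1 if 2a ≥ m + 1 and g_m(a) = m − a otherwise. Then for every a with 1 ≤ a ≤ m − 1, there exists t ≤ (m−1)/2 such that g_m^[t](a) = (m−1)/2 or g_m^[t](a) = (m+1)/2. In particular, every three-digit number in odd base m enters the fixed set within at most (m+1)/2 iterations of the Kaprekar routine. -/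
/-! Write `c = (m + 1) / 2`. On the upper half `a ≥ c` the map is `a ↦ a - 1`, so it walks down
to `c` in `a - c` steps; a lower-half `a ≥ 1` is first sent to `m - a ≥ c`, which then needs
`m - a - c ≤ (m - 3) / 2` further steps. -/

section KaprekarMultiplierMap

variable {m : ℕ} {g : ℕ → ℕ} (hg : ∀ a, g a = if m + 1 ≤ 2 * a then a - 1 else m - a)
include hg

theorem iterate_add_eq_of_upperHalf {c : ℕ} (hc : m + 1 ≤ 2 * c) (j : ℕ) : g^[j] (c + j) = c := by
  induction j with
  | zero => rfl
  | succ j ih =>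
    have hstep : g (c + (j + 1)) = c + j := by rw [hg, if_pos (by omega)]; omega
    rw [Function.iterate_succ_apply, hstep, ih]

theorem iterate_sub_eq_of_upperHalf {c b : ℕ} (hc : m + 1 ≤ 2 * c) (hb : c ≤ b) :
    g^[b - c] b = c := by
  obtain ⟨j, rfl⟩ := Nat.exists_eq_add_of_le hb
  rw [Nat.add_sub_cancel_left]
  exact iterate_add_eq_of_upperHalf hg hc j

theorem apply_eq_of_lowerHalf {a : ℕ} (ha : 2 * a < m + 1) : g a = m - a := by
  rw [hg, if_neg (by omega)]

end KaprekarMultiplierMap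

theorem threeDigitKaprekar_odd_maxStep_general (m : ℕ) (hmo : Odd m)
    (g : ℕ → ℕ) (hg : ∀ a, g a = if m + 1 ≤ 2 * a then a - 1 else m - a) :
    ∀ a : ℕ, 1 ≤ a → a ≤ m - 1 →
      ∃ t : ℕ, t ≤ (m - 1) / 2 ∧ (g^[t] a = (m - 1) / 2 ∨ g^[t] a = (m + 1) / 2) := by
  intro a ha1 ha2
  set c := (m + 1) / 2
  have hc : m + 1 = 2 * c := by obtain ⟨k, rfl⟩ := hmo; omega
  by_cases hupper : c ≤ a
  · exact ⟨a - c, by omega, Or.inr (iterate_sub_eq_of_upperHalf hg hc.le hupper)⟩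
  · refine ⟨m - a - c + 1, by omega, Or.inr ?_⟩
    rw [Function.iterate_succ_apply, apply_eq_of_lowerHalf hg (by omega)]
    exact iterate_sub_eq_of_upperHalf hg hc.le (by omega)

/-- For odd `m ≥ 3`, with `g_m(a) = a-1` if `2a ≥ m+1` and `m-a` otherwise:
every `1 ≤ a ≤ m-1` reaches the two-cycle `{(m-1)/2, (m+1)/2}` within
`(m-1)/2` iterations of `g_m` (so every three-digit number enters the fixed
set within `(m+1)/2` iterations of the Kaprekar routine). -/
theorem threeDigitKaprekar_odd_maxStep (m : ℕ) (hm : 3 ≤ m) (hmo : Odd m)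
    (g : ℕ → ℕ) (hg : ∀ a, g a = if m + 1 ≤ 2 * a then a - 1 else m - a) :
    ∀ a : ℕ, 1 ≤ a → a ≤ m - 1 →
      ∃ t : ℕ, t ≤ (m - 1) / 2 ∧ (g^[t] a = (m - 1) / 2 ∨ g^[t] a = (m + 1) / 2) :=
  threeDigitKaprekar_odd_maxStep_general m hmo g hg
end

section
/- Let m ≥ 2 be an integer and let a be an integer with 1 ≤ a ≤ m. Then a·(m − 1) = (a−1)·m + (m−a), both digits a−1 and m−a lie in [0, m−1], and one step of the two-digit Kaprekar routine applied to the number with digit pair {a−1, m−a} yields |2a − (m+1)|·(m − 1). Equivalently, |(a−1) − (m−a)| = |2a − (m+1)| = h_m(a), so the routine sends a·(m−1) to h_m(a)·(m−1). -/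
theorem mul_sub_one_eq_digits {m a : ℕ} (ha1 : 1 ≤ a) (ha2 : a ≤ m) :
    a * (m - 1) = (a - 1) * m + (m - a) := by
  zify [ha1, ha2, ha1.trans ha2]
  ring

theorem two_digit_sub_reverse (m : ℕ) {d₁ d₂ : ℕ} (h : d₂ ≤ d₁) :
    (m * d₁ + d₂) - (m * d₂ + d₁) = (d₁ - d₂) * (m - 1) := by
  obtain ⟨k, rfl⟩ := Nat.exists_eq_add_of_le h
  rcases m with _ | m
  · simp
  · simp only [Nat.add_sub_cancel_left, Nat.add_sub_cancel]
    ring_nf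
    omega

theorem Nat.max_sub_min_eq_natAbs (x y : ℕ) : max x y - min x y = ((x : ℤ) - y).natAbs := by
  omega

theorem twoDigitKaprekar_step_general (m a : ℕ) (ha1 : 1 ≤ a) (ha2 : a ≤ m) :
    a * (m - 1) = (a - 1) * m + (m - a) ∧
    a - 1 ≤ m - 1 ∧ m - a ≤ m - 1 ∧
    (m * max (a - 1) (m - a) + min (a - 1) (m - a)) -
        (m * min (a - 1) (m - a) + max (a - 1) (m - a)) =
      (2 * (a : ℤ) - (m + 1)).natAbs * (m - 1) ∧
    max (a - 1) (m - a) - min (a - 1) (m - a) = (2 * (a : ℤ) - (m + 1)).natAbs := by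
  have hdiff : max (a - 1) (m - a) - min (a - 1) (m - a) = (2 * (a : ℤ) - (m + 1)).natAbs := by
    rw [Nat.max_sub_min_eq_natAbs]
    push_cast [ha1, ha2]
    ring_nf
  refine ⟨mul_sub_one_eq_digits ha1 ha2, by omega, by omega, ?_, hdiff⟩
  rw [two_digit_sub_reverse m min_le_max, hdiff]

/-- For `m ≥ 2` and `1 ≤ a ≤ m`: the base-`m` expansion of `a*(m-1)` has
digits `a-1` and `m-a`, both valid digits, and one step of the two-digit
Kaprekar routine applied to this digit pair yields `|2a-(m+1)|*(m-1)`;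
equivalently `|(a-1)-(m-a)| = |2a-(m+1)| = h_m(a)`. -/
theorem twoDigitKaprekar_step (m a : ℕ) (hm : 2 ≤ m) (ha1 : 1 ≤ a) (ha2 : a ≤ m) :
    a * (m - 1) = (a - 1) * m + (m - a) ∧
    a - 1 ≤ m - 1 ∧ m - a ≤ m - 1 ∧
    (m * max (a - 1) (m - a) + min (a - 1) (m - a)) -
        (m * min (a - 1) (m - a) + max (a - 1) (m - a)) =
      (2 * (a : ℤ) - (m + 1)).natAbs * (m - 1) ∧
    max (a - 1) (m - a) - min (a - 1) (m - a) = (2 * (a : ℤ) - (m + 1)).natAbs :=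
  twoDigitKaprekar_step_general m a ha1 ha2
end

section
/- Let m ≥ 2 be an integer and define h_m : ℕ → ℕ by h_m(a) = |2a − (m+1)|. Then there exists an integer a with 1 ≤ a ≤ m and h_m(a) = a if and only if 3 divides m + 1. Moreover, when 3 divides m + 1, the unique such a is a = (m+1)/3. Hence the two-digit Kaprekar routine in base m has a nontrivial fixed set of cardinality 1 if and only if 3 ∣ m+1, and such a fixed set is unique. -/
/-! `h a = a` means `2a - (m+1) = ±a`. The sign `+` forces `a = m + 1`, outside the range
`a ≤ m`; the sign `-` is exactly `3a = m + 1`. -/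

theorem Int.natAbs_two_mul_sub_eq_self_iff {a n : ℕ} (ha : a < n) :
    (2 * (a : ℤ) - n).natAbs = a ↔ 3 * a = n := by
  rw [Int.natAbs_eq_iff]
  omega

theorem twoDigitKaprekar_period_one_general (m : ℕ)
    (h : ℕ → ℕ) (hh : ∀ a : ℕ, h a = (2 * (a : ℤ) - (m + 1)).natAbs) :
    ((∃ a : ℕ, 1 ≤ a ∧ a ≤ m ∧ h a = a) ↔ 3 ∣ m + 1) ∧
    (3 ∣ m + 1 → ∀ a : ℕ, 1 ≤ a → a ≤ m → (h a = a ↔ a = (m + 1) / 3)) := by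
  have fixed_iff (a : ℕ) (ha : a ≤ m) : h a = a ↔ 3 * a = m + 1 := by
    have := Int.natAbs_two_mul_sub_eq_self_iff (Nat.lt_succ_of_le ha)
    push_cast at this
    rw [hh, this]
  refine ⟨⟨?_, ?_⟩, ?_⟩
  · rintro ⟨a, -, ha, hfix⟩
    exact ⟨a, ((fixed_iff a ha).mp hfix).symm⟩
  · rintro ⟨k, hk⟩
    exact ⟨k, by omega, by omega, (fixed_iff k (by omega)).mpr hk.symm⟩
  · intro hdvd a _ ha
    rw [fixed_iff a ha]
    omega

/-- For `m ≥ 2`, with `h_m(a) = |2a - (m+1)|`: there exists `1 ≤ a ≤ m` with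
`h_m(a) = a` iff `3 ∣ m+1`, and in that case the unique such `a` is
`(m+1)/3`. -/
theorem twoDigitKaprekar_period_one (m : ℕ) (hm : 2 ≤ m)
    (h : ℕ → ℕ) (hh : ∀ a : ℕ, h a = (2 * (a : ℤ) - (m + 1)).natAbs) :
    ((∃ a : ℕ, 1 ≤ a ∧ a ≤ m ∧ h a = a) ↔ 3 ∣ m + 1) ∧
    (3 ∣ m + 1 → ∀ a : ℕ, 1 ≤ a → a ≤ m → (h a = a ↔ a = (m + 1) / 3)) :=
  twoDigitKaprekar_period_one_general m h hh
end

section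
/- Let m ≥ 2 be an integer, define h_m : ℕ → ℕ by h_m(a) = |2a − (m+1)|, and let t ≥ 1. Then there exists an integer a with 1 ≤ a ≤ m and h_m^[t](a) = a if and only if gcd(m+1, 2^t + 1) > 1 or gcd(m+1, 2^t − 1) > 1. -/
/-!
Modulo `n = m + 1` the map `h(a) = |2a - n|` is `a ↦ ±2a`, so `h^[t] a ≡ ±2^t a`. Hence a fixed
point `1 ≤ a < n` of `h^[t]` gives a nonzero `x : ZMod n` with `(2^t ∓ 1) x = 0`, i.e. `2^t ∓ 1` is a
zero divisor, hence a non-unit, of `ZMod n`, which means it is not coprime to `n`. Conversely, for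
such an `x` with representative `0 < c < n`, the value `h^[t] c ∈ [0, n]` is `≡ ±c`, so it is `c` or
`n - c`; in the second case `n - c` is the fixed point, because `h(n - c) = h(c)`.
-/

namespace ZMod

variable {n : ℕ}

theorem exists_ne_zero_mul_eq_zero_iff [NeZero n] (k : ℕ) :
    (∃ x : ZMod n, x ≠ 0 ∧ (k : ZMod n) * x = 0) ↔ 1 < n.gcd k := by
  have hpos : 0 < n.gcd k := Nat.gcd_pos_of_pos_left k (Nat.pos_of_neZero n)
  rw [← not_iff_not, not_lt, Nat.le_one_iff_eq_zero_or_eq_one, or_iff_right hpos.ne',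
    ← Nat.Coprime, Nat.coprime_comm, ← isUnit_iff_coprime,
    isUnit_iff_mem_nonZeroDivisors_of_finite, mem_nonZeroDivisors_iff_left]
  simp only [not_exists, not_and, ne_eq, not_imp_not]

theorem eq_of_natCast_eq_of_le {b c : ℕ} (hb : b ≤ n) (hc : 0 < c) (hcn : c < n)
    (h : (b : ZMod n) = c) : b = c := by
  rw [natCast_eq_natCast_iff', Nat.mod_eq_of_lt hcn] at h
  rcases hb.lt_or_eq with hb | rfl
  · rwa [Nat.mod_eq_of_lt hb] at h
  · rw [Nat.mod_self] at h
    omega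

theorem eq_sub_of_natCast_eq_neg {b c : ℕ} (hb : b ≤ n) (hc : 0 < c) (hcn : c < n)
    (h : (b : ZMod n) = -c) : b = n - c := by
  have hdvd : n ∣ b + c := by
    rw [← natCast_eq_zero_iff, Nat.cast_add, h, neg_add_cancel]
  have hle : n ≤ b + c := Nat.le_of_dvd (by omega) hdvd
  have := Nat.eq_zero_of_dvd_of_lt (Nat.dvd_sub hdvd dvd_rfl) (by omega : b + c - n < n)
  omega

end ZMod

namespace Kaprekar

def twoDigitMap (n a : ℕ) : ℕ := (2 * (a : ℤ) - n).natAbs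

variable {n : ℕ}

theorem twoDigitMap_le {a : ℕ} (ha : a ≤ n) : twoDigitMap n a ≤ n := by
  unfold twoDigitMap
  omega

theorem iterate_twoDigitMap_le {a : ℕ} (ha : a ≤ n) (s : ℕ) : (twoDigitMap n)^[s] a ≤ n :=
  (show Set.MapsTo (twoDigitMap n) (Set.Iic n) (Set.Iic n) from
    fun _ hb => twoDigitMap_le hb).iterate s ha

theorem twoDigitMap_sub_self {c : ℕ} (hc : c ≤ n) :
    twoDigitMap n (n - c) = twoDigitMap n c := by
  unfold twoDigitMap
  omega

theorem cast_twoDigitMap (a : ℕ) :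
    (twoDigitMap n a : ZMod n) = 2 * a ∨ (twoDigitMap n a : ZMod n) = -(2 * a) := by
  have hcast : ((2 * (a : ℤ) - n : ℤ) : ZMod n) = 2 * a := by simp
  rcases Int.natAbs_eq (2 * (a : ℤ) - n) with h | h
  · left
    rw [twoDigitMap, ← hcast, ← Int.cast_natCast, ← h]
  · right
    rw [twoDigitMap, ← hcast, ← Int.cast_natCast, ← Int.cast_neg, ← neg_eq_iff_eq_neg.mpr h]

theorem cast_iterate_twoDigitMap (a s : ℕ) :
    ((twoDigitMap n)^[s] a : ZMod n) = 2 ^ s * a ∨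
      ((twoDigitMap n)^[s] a : ZMod n) = -(2 ^ s * a) := by
  induction s with
  | zero => simp
  | succ s ih =>
    rw [Function.iterate_succ_apply', pow_succ']
    rcases cast_twoDigitMap (n := n) ((twoDigitMap n)^[s] a) with h | h <;>
      rcases ih with ih | ih <;> simp only [h, ih, mul_assoc, mul_neg, neg_neg, true_or, or_true]

theorem exists_fixedPt_iterate_iff [NeZero n] {t : ℕ} (ht : t ≠ 0) :
    (∃ a, 1 ≤ a ∧ a < n ∧ (twoDigitMap n)^[t] a = a) ↔
      ∃ x : ZMod n, x ≠ 0 ∧ ((2 ^ t + 1) * x = 0 ∨ (2 ^ t - 1) * x = 0) := by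
  constructor
  · rintro ⟨a, ha, han, hfix⟩
    refine ⟨a, ?_, ?_⟩
    · rw [Ne, ZMod.natCast_eq_zero_iff]
      exact fun hdvd => by have := Nat.le_of_dvd ha hdvd; omega
    · rcases cast_iterate_twoDigitMap (n := n) a t with h | h <;> rw [hfix] at h
      exacts [Or.inr (by linear_combination -h), Or.inl (by linear_combination h)]
  · rintro ⟨x, hx, hsign⟩
    set c := x.val
    have hc : 0 < c := ZMod.val_pos.mpr hx
    have hcn : c < n := ZMod.val_lt x
    have hcx : (c : ZMod n) = x := ZMod.natCast_zmod_val x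
    have hb := iterate_twoDigitMap_le hcn.le t
    have hcast : ((twoDigitMap n)^[t] c : ZMod n) = c ∨
        ((twoDigitMap n)^[t] c : ZMod n) = -c := by
      rw [hcx]
      rcases cast_iterate_twoDigitMap (n := n) c t with h | h <;> rw [h, hcx] <;>
        rcases hsign with hs | hs
      exacts [Or.inr (by linear_combination hs), Or.inl (by linear_combination hs),
        Or.inl (by linear_combination -hs), Or.inr (by linear_combination -hs)]
    rcases hcast with h | h
    · exact ⟨c, hc, hcn, ZMod.eq_of_natCast_eq_of_le hb hc hcn h⟩
    · refine ⟨n - c, by omega, by omega, ?_⟩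
      obtain ⟨s, rfl⟩ := Nat.exists_eq_succ_of_ne_zero ht
      rw [Function.iterate_succ_apply, twoDigitMap_sub_self hcn.le, ← Function.iterate_succ_apply]
      exact ZMod.eq_sub_of_natCast_eq_neg hb hc hcn h

end Kaprekar

theorem twoDigitKaprekar_period_t_general (m t : ℕ) (ht : 1 ≤ t)
    (h : ℕ → ℕ) (hh : ∀ a : ℕ, h a = (2 * (a : ℤ) - (m + 1)).natAbs) :
    (∃ a : ℕ, 1 ≤ a ∧ a ≤ m ∧ h^[t] a = a) ↔
      1 < Nat.gcd (m + 1) (2 ^ t + 1) ∨ 1 < Nat.gcd (m + 1) (2 ^ t - 1) := by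
  have h_eq : h = Kaprekar.twoDigitMap (m + 1) :=
    funext fun a => by rw [hh, Kaprekar.twoDigitMap]; push_cast; rfl
  rw [h_eq, ← ZMod.exists_ne_zero_mul_eq_zero_iff, ← ZMod.exists_ne_zero_mul_eq_zero_iff,
    Nat.cast_sub Nat.one_le_two_pow]
  push_cast
  rw [← exists_or]
  simp only [← and_or_left, ← Kaprekar.exists_fixedPt_iterate_iff (by omega : t ≠ 0),
    Nat.lt_succ_iff]

/-- For `m ≥ 2` and `t ≥ 1`, with `h_m(a) = |2a - (m+1)|`: there exists
`1 ≤ a ≤ m` with `h_m^[t](a) = a` iff `gcd(m+1, 2^t+1) > 1` or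
`gcd(m+1, 2^t-1) > 1`. -/
theorem twoDigitKaprekar_period_t (m t : ℕ) (hm : 2 ≤ m) (ht : 1 ≤ t)
    (h : ℕ → ℕ) (hh : ∀ a : ℕ, h a = (2 * (a : ℤ) - (m + 1)).natAbs) :
    (∃ a : ℕ, 1 ≤ a ∧ a ≤ m ∧ h^[t] a = a) ↔
      1 < Nat.gcd (m + 1) (2 ^ t + 1) ∨ 1 < Nat.gcd (m + 1) (2 ^ t - 1) :=
  twoDigitKaprekar_period_t_general m t ht h hh
end

section
/- Let m ≥ 2 be an integer, define h_m : ℕ → ℕ by h_m(a) = |2a − (m+1)|, and let t ≥ 1. Write d₊ = gcd(m+1, 2^t + 1) and d₋ = gcd(m+1, 2^t − 1). Then the set {a : 1 ≤ a ≤ m and h_m^[t](a) = a} is equal to the union of { ξ₁·(m+1)/d₊ : ξ₁ odd, 1 ≤ ξ₁ < d₊ } and { ξ₂·(m+1)/d₋ : ξ₂ odd, 1 ≤ ξ₂ < d₋ }. -/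
/-! For `t ≥ 1` every iterate `h^[t] a` equals `|2^t a - k (m+1)|` for some odd `k`, and `h` maps
`[0, m+1]` into itself. Odd multiples of `m+1` lie at least `2(m+1)` apart, so for `a ≤ m` the
equation `h^[t] a = a` holds iff `|2^t a - k (m+1)| = a` for some odd `k`, i.e. iff
`(2^t ± 1) a = k (m+1)` with `k` odd. With `d = gcd(m+1, 2^t ± 1)` this forces `a = ξ (m+1)/d`,
and `k` is odd exactly when `ξ` is. -/

theorem Int.eq_of_odd_of_abs_sub_mul_le_of_lt {x k j n : ℤ} (hk : Odd k) (hj : Odd j)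
    (hkx : |x - k * n| ≤ n) (hjx : |x - j * n| < n) : k = j := by
  have hn : 0 < n := (abs_nonneg _).trans_lt hjx
  have hlt : |k - j| * n < 2 * n := by
    calc |k - j| * n = |(x - j * n) - (x - k * n)| := by
          rw [show (x - j * n) - (x - k * n) = (k - j) * n by ring, abs_mul, abs_of_pos hn]
      _ ≤ |x - j * n| + |x - k * n| := abs_sub _ _
      _ < 2 * n := by linarith
  have hkj := abs_lt.mp (lt_of_mul_lt_mul_right hlt hn.le)
  obtain ⟨e, he⟩ : Even (k - j) := hk.sub_odd hj
  omega

theorem Nat.exists_odd_mul_eq_iff_exists_odd_mul_div_gcd {n c a : ℕ} (hn : 0 < n) (hc : Odd c) :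
    (0 < a ∧ a < n ∧ ∃ k, Odd k ∧ c * a = k * n) ↔
      ∃ ξ, Odd ξ ∧ 1 ≤ ξ ∧ ξ < n.gcd c ∧ a = ξ * (n / n.gcd c) := by
  obtain ⟨g, c', hcop, hng, hcc'⟩ := Nat.exists_coprime n c
  set d := n.gcd c
  have hd : 0 < d := Nat.gcd_pos_of_pos_left c hn
  have hg : 0 < g := Nat.pos_of_ne_zero (by rintro rfl; omega)
  have hc' : Odd c' := (Nat.odd_mul.mp (hcc' ▸ hc)).1
  rw [show n / d = g by rw [hng, Nat.mul_div_cancel _ hd]]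
  constructor
  · rintro ⟨ha0, han, k, hk, hcak⟩
    have hc'a : c' * a = k * g := by
      apply Nat.eq_of_mul_eq_mul_right hd
      rw [mul_right_comm, ← hcc', hcak, hng, mul_assoc]
    obtain ⟨ξ, rfl⟩ := hcop.dvd_of_dvd_mul_left ⟨k, by rw [hc'a, mul_comm]⟩
    have hkξ : k = c' * ξ := Nat.eq_of_mul_eq_mul_right hg (by rw [← hc'a]; ring)
    refine ⟨ξ, (Nat.odd_mul.mp (hkξ ▸ hk)).2, Nat.pos_of_mul_pos_left ha0, ?_, mul_comm _ _⟩
    rw [hng] at han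
    exact lt_of_mul_lt_mul_left han hg.le
  · rintro ⟨ξ, hξ, hξ1, hξd, rfl⟩
    refine ⟨Nat.mul_pos hξ1 hg, ?_, c' * ξ, Nat.odd_mul.mpr ⟨hc', hξ⟩, ?_⟩
    · rw [hng, mul_comm g]; exact Nat.mul_lt_mul_of_pos_right hξd hg
    · rw [hcc', hng]; ring

theorem Int.exists_odd_natCast_mul_eq {b n : ℕ} {k : ℤ} (hk : Odd k) (hb : (b : ℤ) = k * n) :
    ∃ k' : ℕ, Odd k' ∧ b = k' * n :=
  ⟨k.natAbs, Int.natAbs_odd.mpr hk, by simpa [Int.natAbs_mul] using congrArg Int.natAbs hb⟩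

theorem exists_odd_abs_mul_sub_mul_eq_iff {s n a : ℕ} (hs : 1 ≤ s) :
    (∃ k : ℤ, Odd k ∧ |(s : ℤ) * a - k * n| = a) ↔
      (∃ k : ℕ, Odd k ∧ (s + 1) * a = k * n) ∨ ∃ k : ℕ, Odd k ∧ (s - 1) * a = k * n := by
  constructor
  · rintro ⟨k, hk, hka⟩
    rcases (abs_eq (Int.natCast_nonneg a)).mp hka with hka | hka
    · right
      exact Int.exists_odd_natCast_mul_eq hk (by push_cast [hs]; linarith)
    · left
      exact Int.exists_odd_natCast_mul_eq hk (by push_cast; linarith)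
  · rintro (⟨k, hk, hka⟩ | ⟨k, hk, hka⟩) <;> refine ⟨k, hk.natCast, ?_⟩
    · zify at hka
      rw [show (s : ℤ) * a - k * n = -a by linarith, abs_neg, abs_of_nonneg (Int.natCast_nonneg a)]
    · zify [hs] at hka
      rw [show (s : ℤ) * a - k * n = a by linarith, abs_of_nonneg (Int.natCast_nonneg a)]

theorem Int.exists_odd_abs_two_mul_abs_sub_eq (x k n : ℤ) :
    ∃ j, Odd j ∧ |2 * |x - k * n| - n| = |2 * x - j * n| := by
  rcases abs_cases (x - k * n) with ⟨hx, -⟩ | ⟨hx, -⟩ <;> rw [hx]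
  · exact ⟨2 * k + 1, odd_two_mul_add_one k, by ring_nf⟩
  · refine ⟨2 * k - 1, ⟨k - 1, by ring⟩, ?_⟩
    rw [← abs_neg]; ring_nf

namespace TwoDigitKaprekar

variable {n : ℕ} {h : ℕ → ℕ}

theorem iterate_le_of_le (hh : ∀ a : ℕ, h a = (2 * (a : ℤ) - n).natAbs) {a : ℕ} (ha : a ≤ n)
    (t : ℕ) : h^[t] a ≤ n := by
  have hmaps : Set.MapsTo h (Set.Iic n) (Set.Iic n) := fun b (hb : b ≤ n) => by
    simp only [Set.mem_Iic, hh]; omega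
  exact hmaps.iterate t ha

theorem exists_odd_iterate_succ_eq_abs (hh : ∀ a : ℕ, h a = (2 * (a : ℤ) - n).natAbs) (a t : ℕ) :
    ∃ k : ℤ, Odd k ∧ (h^[t + 1] a : ℤ) = |2 ^ (t + 1) * a - k * n| := by
  induction t with
  | zero => exact ⟨1, odd_one, by simp [hh]⟩
  | succ t ih =>
    obtain ⟨k, -, hk⟩ := ih
    obtain ⟨j, hj, hkj⟩ := Int.exists_odd_abs_two_mul_abs_sub_eq (2 ^ (t + 1) * a) k n
    refine ⟨j, hj, ?_⟩
    rw [Function.iterate_succ_apply', hh, Int.natCast_natAbs, hk, hkj]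
    ring_nf

theorem iterate_succ_eq_self_iff (hh : ∀ a : ℕ, h a = (2 * (a : ℤ) - n).natAbs)
    {a : ℕ} (ha : a < n) (t : ℕ) :
    h^[t + 1] a = a ↔ ∃ k : ℤ, Odd k ∧ |2 ^ (t + 1) * (a : ℤ) - k * n| = a := by
  obtain ⟨k, hk, hka⟩ := exists_odd_iterate_succ_eq_abs hh a t
  refine ⟨fun hfix => ⟨k, hk, by rw [← hka, hfix]⟩, fun ⟨j, hj, hja⟩ => ?_⟩
  have hkn : |2 ^ (t + 1) * (a : ℤ) - k * n| ≤ n := by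
    rw [← hka]; exact_mod_cast iterate_le_of_le hh ha.le _
  have hjn : |2 ^ (t + 1) * (a : ℤ) - j * n| < n := by rw [hja]; exact_mod_cast ha
  rw [Int.eq_of_odd_of_abs_sub_mul_le_of_lt hk hj hkn hjn, hja] at hka
  exact_mod_cast hka

theorem iterate_succ_eq_self_iff_exists_odd (hh : ∀ a : ℕ, h a = (2 * (a : ℤ) - n).natAbs)
    {a : ℕ} (ha : a < n) (t : ℕ) :
    h^[t + 1] a = a ↔
      (∃ k, Odd k ∧ (2 ^ (t + 1) + 1) * a = k * n) ∨ ∃ k, Odd k ∧ (2 ^ (t + 1) - 1) * a = k * n := by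
  rw [iterate_succ_eq_self_iff hh ha, ← exists_odd_abs_mul_sub_mul_eq_iff Nat.one_le_two_pow]
  push_cast
  rfl

end TwoDigitKaprekar

theorem twoDigitKaprekar_period_t_solution_set_general (m t : ℕ) (ht : 1 ≤ t)
    (h : ℕ → ℕ) (hh : ∀ a : ℕ, h a = (2 * (a : ℤ) - (m + 1)).natAbs) :
    {a : ℕ | 1 ≤ a ∧ a ≤ m ∧ h^[t] a = a} =
      {a : ℕ | ∃ ξ₁ : ℕ, Odd ξ₁ ∧ 1 ≤ ξ₁ ∧ ξ₁ < Nat.gcd (m + 1) (2 ^ t + 1) ∧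
          a = ξ₁ * ((m + 1) / Nat.gcd (m + 1) (2 ^ t + 1))} ∪
        {a : ℕ | ∃ ξ₂ : ℕ, Odd ξ₂ ∧ 1 ≤ ξ₂ ∧ ξ₂ < Nat.gcd (m + 1) (2 ^ t - 1) ∧
          a = ξ₂ * ((m + 1) / Nat.gcd (m + 1) (2 ^ t - 1))} := by
  obtain ⟨s, rfl⟩ : ∃ s, t = s + 1 := ⟨t - 1, by omega⟩
  have hh' : ∀ a : ℕ, h a = (2 * (a : ℤ) - (m + 1 : ℕ)).natAbs := by exact_mod_cast hh
  have heven : Even (2 ^ (s + 1)) := (Nat.even_pow' s.succ_ne_zero).mpr even_two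
  ext a
  simp only [Set.mem_ofPred_eq, Set.mem_union]
  rw [← Nat.exists_odd_mul_eq_iff_exists_odd_mul_div_gcd m.add_one_pos heven.add_one,
    ← Nat.exists_odd_mul_eq_iff_exists_odd_mul_div_gcd m.add_one_pos
      (Nat.Even.sub_odd Nat.one_le_two_pow heven odd_one)]
  by_cases ha : a < m + 1
  · rw [TwoDigitKaprekar.iterate_succ_eq_self_iff_exists_odd hh' ha, ← and_or_left, ← and_or_left,
      Nat.lt_add_one_iff, Nat.one_le_iff_ne_zero, Nat.pos_iff_ne_zero]
  · omega

/-- For `m ≥ 2` and `t ≥ 1`, with `h_m(a) = |2a - (m+1)|`, `d₊ = gcd(m+1, 2^t+1)`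
and `d₋ = gcd(m+1, 2^t-1)`: the set of solutions `1 ≤ a ≤ m` of `h_m^[t](a) = a`
is exactly `{ξ₁(m+1)/d₊ : ξ₁ odd, 1 ≤ ξ₁ < d₊} ∪ {ξ₂(m+1)/d₋ : ξ₂ odd, 1 ≤ ξ₂ < d₋}`. -/
theorem twoDigitKaprekar_period_t_solution_set (m t : ℕ) (hm : 2 ≤ m) (ht : 1 ≤ t)
    (h : ℕ → ℕ) (hh : ∀ a : ℕ, h a = (2 * (a : ℤ) - (m + 1)).natAbs) :
    {a : ℕ | 1 ≤ a ∧ a ≤ m ∧ h^[t] a = a} =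
      {a : ℕ | ∃ ξ₁ : ℕ, Odd ξ₁ ∧ 1 ≤ ξ₁ ∧ ξ₁ < Nat.gcd (m + 1) (2 ^ t + 1) ∧
          a = ξ₁ * ((m + 1) / Nat.gcd (m + 1) (2 ^ t + 1))} ∪
        {a : ℕ | ∃ ξ₂ : ℕ, Odd ξ₂ ∧ 1 ≤ ξ₂ ∧ ξ₂ < Nat.gcd (m + 1) (2 ^ t - 1) ∧
          a = ξ₂ * ((m + 1) / Nat.gcd (m + 1) (2 ^ t - 1))} :=
  twoDigitKaprekar_period_t_solution_set_general m t ht h hh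
end

section
/- Let m₁ ≥ 2 and m₂ ≥ 2 be integers such that m₁ + 1 and m₂ + 1 have the same largest odd divisor (i.e., they differ only in their power-of-2 factor). Then for every t ≥ 1, there exists a with 1 ≤ a ≤ m₁ and h_{m₁}^[t](a) = a if and only if there exists a with 1 ≤ a ≤ m₂ and h_{m₂}^[t](a) = a. In other words, the number of 2-factors of m+1 has no influence on the set of periods of the two-digit Kaprekar routine in base m. -/
/-!
Write `m + 1 = 2^r k` and let `g_n(a) = |2a - n|`, so that `h_m = g_{m+1}`. Scaling by
`2^r` conjugates `g_k` to `g_{2^r k}`, so periodic points of `g_k` in `(0, k)` give periodic points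
of `h_m` in `[1, m]`. Conversely, if `2^s ∣ a` then `2^(min (s+1) r) ∣ h_m a`, so along an orbit the
power of 2 dividing the iterates grows until it reaches `2^r`; a periodic point is therefore
divisible by `2^r`, i.e. lies in the image of the scaling. Hence the periods of `h_m` on `[1, m]`
are those of `g_k` on `(0, k)`, which depend only on `k`.
-/

open Function

namespace TwoDigitKaprekar

def kaprekarMap (n : ℕ) (a : ℕ) : ℕ := (2 * (a : ℤ) - n).natAbs

theorem semiconj_mul_kaprekarMap (c n : ℕ) :
    Semiconj (c * ·) (kaprekarMap n) (kaprekarMap (c * n)) := fun x => by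
  have h : 2 * ((c * x : ℕ) : ℤ) - (c * n : ℕ) = c * (2 * x - n) := by push_cast; ring
  simp only [kaprekarMap, h, Int.natAbs_mul, Int.natAbs_natCast]

theorem isPeriodicPt_of_semiconj_of_injective {α β : Type*} {fa : α → α} {fb : β → β}
    {g : α → β} (h : Semiconj g fa fb) (hg : Injective g) {n : ℕ} {x : α}
    (hx : IsPeriodicPt fb n (g x)) : IsPeriodicPt fa n x :=
  hg <| (h.iterate_right n x).trans hx

theorem dvd_kaprekarMap {d n x : ℕ} (hx : d ∣ 2 * x) (hn : d ∣ n) : d ∣ kaprekarMap n x :=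
  Int.ofNat_dvd_left.mp <| dvd_sub (by exact_mod_cast hx) (by exact_mod_cast hn)

theorem two_pow_min_dvd_iterate_kaprekarMap (r k a i : ℕ) :
    2 ^ min i r ∣ (kaprekarMap (2 ^ r * k))^[i] a := by
  induction i with
  | zero => simp
  | succ i ih =>
    rw [iterate_succ_apply']
    refine dvd_kaprekarMap ?_ (dvd_mul_of_dvd_left (pow_dvd_pow 2 (min_le_right _ _)) k)
    calc 2 ^ min (i + 1) r ∣ 2 ^ (min i r + 1) := pow_dvd_pow 2 (by omega)
      _ = 2 * 2 ^ min i r := pow_succ' 2 _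
      _ ∣ 2 * _ := mul_dvd_mul_left 2 ih

theorem two_pow_dvd_of_isPeriodicPt {r k t a : ℕ} (ht : 0 < t)
    (ha : IsPeriodicPt (kaprekarMap (2 ^ r * k)) t a) : 2 ^ r ∣ a := by
  have h := two_pow_min_dvd_iterate_kaprekarMap r k a (t * r)
  rwa [min_eq_right (Nat.le_mul_of_pos_left r ht), (ha.mul_const r).eq] at h

theorem exists_isPeriodicPt_kaprekarMap_two_pow_mul_iff (r k t : ℕ) (ht : 0 < t) :
    (∃ a, 0 < a ∧ a < 2 ^ r * k ∧ IsPeriodicPt (kaprekarMap (2 ^ r * k)) t a) ↔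
      ∃ b, 0 < b ∧ b < k ∧ IsPeriodicPt (kaprekarMap k) t b := by
  have hconj := semiconj_mul_kaprekarMap (2 ^ r) k
  have hpos : 0 < 2 ^ r := Nat.two_pow_pos r
  constructor
  · rintro ⟨_, ha₀, hak, ha⟩
    obtain ⟨b, rfl⟩ := two_pow_dvd_of_isPeriodicPt ht ha
    exact ⟨b, Nat.pos_of_mul_pos_left ha₀, Nat.lt_of_mul_lt_mul_left hak,
      isPeriodicPt_of_semiconj_of_injective hconj (mul_right_injective₀ hpos.ne') ha⟩
  · rintro ⟨b, hb₀, hbk, hb⟩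
    exact ⟨2 ^ r * b, Nat.mul_pos hpos hb₀, Nat.mul_lt_mul_of_pos_left hbk hpos, hb.map hconj⟩

theorem exists_iterate_eq_iff_of_eq_kaprekarMap {m t : ℕ} {h : ℕ → ℕ}
    (hh : ∀ a : ℕ, h a = (2 * (a : ℤ) - (m + 1)).natAbs) :
    (∃ a : ℕ, 1 ≤ a ∧ a ≤ m ∧ h^[t] a = a) ↔
      ∃ a, 0 < a ∧ a < m + 1 ∧ IsPeriodicPt (kaprekarMap (m + 1)) t a := by
  obtain rfl : h = kaprekarMap (m + 1) := funext fun a => by simp [hh, kaprekarMap]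
  simp only [IsPeriodicPt, IsFixedPt, Nat.lt_succ_iff, Nat.one_le_iff_ne_zero, Nat.pos_iff_ne_zero]

end TwoDigitKaprekar

open TwoDigitKaprekar in
theorem twoDigitKaprekar_periods_independent_of_two_factors_general
    (m₁ m₂ : ℕ)
    (hodd : ∃ k r₁ r₂ : ℕ, Odd k ∧ m₁ + 1 = 2 ^ r₁ * k ∧ m₂ + 1 = 2 ^ r₂ * k)
    (h₁ h₂ : ℕ → ℕ)
    (hh₁ : ∀ a : ℕ, h₁ a = (2 * (a : ℤ) - (m₁ + 1)).natAbs)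
    (hh₂ : ∀ a : ℕ, h₂ a = (2 * (a : ℤ) - (m₂ + 1)).natAbs) :
    ∀ t : ℕ, 1 ≤ t →
      ((∃ a : ℕ, 1 ≤ a ∧ a ≤ m₁ ∧ h₁^[t] a = a) ↔
        (∃ a : ℕ, 1 ≤ a ∧ a ≤ m₂ ∧ h₂^[t] a = a)) := by
  obtain ⟨k, r₁, r₂, -, hk₁, hk₂⟩ := hodd
  intro t ht
  rw [exists_iterate_eq_iff_of_eq_kaprekarMap hh₁, exists_iterate_eq_iff_of_eq_kaprekarMap hh₂,
    hk₁, hk₂, exists_isPeriodicPt_kaprekarMap_two_pow_mul_iff r₁ k t ht,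
    exists_isPeriodicPt_kaprekarMap_two_pow_mul_iff r₂ k t ht]

/-- If `m₁, m₂ ≥ 2` are such that `m₁+1` and `m₂+1` have the same largest odd
divisor (i.e. `mᵢ+1 = 2^{rᵢ}·k` for a common odd `k`), then for every `t ≥ 1`,
`h_{m₁}` has a periodic point of period `t` in `[1, m₁]` iff `h_{m₂}` has one
in `[1, m₂]`: the power of 2 in `m+1` has no influence on the set of periods. -/
theorem twoDigitKaprekar_periods_independent_of_two_factors
    (m₁ m₂ : ℕ) (hm₁ : 2 ≤ m₁) (hm₂ : 2 ≤ m₂)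
    (hodd : ∃ k r₁ r₂ : ℕ, Odd k ∧ m₁ + 1 = 2 ^ r₁ * k ∧ m₂ + 1 = 2 ^ r₂ * k)
    (h₁ h₂ : ℕ → ℕ)
    (hh₁ : ∀ a : ℕ, h₁ a = (2 * (a : ℤ) - (m₁ + 1)).natAbs)
    (hh₂ : ∀ a : ℕ, h₂ a = (2 * (a : ℤ) - (m₂ + 1)).natAbs) :
    ∀ t : ℕ, 1 ≤ t →
      ((∃ a : ℕ, 1 ≤ a ∧ a ≤ m₁ ∧ h₁^[t] a = a) ↔
        (∃ a : ℕ, 1 ≤ a ∧ a ≤ m₂ ∧ h₂^[t] a = a)) :=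
  twoDigitKaprekar_periods_independent_of_two_factors_general m₁ m₂ hodd h₁ h₂ hh₁ hh₂
end

section
/- Let m ≥ 2 be an integer such that m + 1 is a power of 2, and define h_m : ℕ → ℕ by h_m(a) = |2a − (m+1)|. Then for every integer a with 1 ≤ a ≤ m and every t ≥ 1, h_m^[t](a) ≠ a. In other words, the two-digit Kaprekar routine in base m has only the trivial fixed point 0. -/
/-!
Modulo `N`, the map `a ↦ |2a - N|` is multiplication by `2` up to a sign, so `h_m^[t](a) ≡ ±2^t a`
modulo `m + 1 = 2^k`. A point of period `t ≥ 1` therefore satisfies `2^k ∣ (±2^t - 1) a`, and since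
`±2^t - 1` is odd, `2^k ∣ a`, which is impossible for `1 ≤ a < 2^k`.
-/

theorem Int.exists_unit_natAbs_two_mul_sub_modEq (N x : ℤ) :
    ∃ ε : ℤˣ, ((2 * x - N).natAbs : ℤ) ≡ ε * (2 * x) [ZMOD N] := by
  obtain ⟨ε, hε⟩ := Int.associated_natAbs (2 * x - N)
  refine ⟨ε, ?_⟩
  rw [← hε, Int.modEq_iff_dvd]
  exact ⟨ε, by ring⟩

theorem exists_unit_iterate_modEq_two_pow_mul {N : ℤ} {f : ℕ → ℕ}
    (hf : ∀ a : ℕ, f a = (2 * (a : ℤ) - N).natAbs) (a t : ℕ) :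
    ∃ ε : ℤˣ, (f^[t] a : ℤ) ≡ ε * 2 ^ t * a [ZMOD N] := by
  induction t with
  | zero => exact ⟨1, by simp [Int.ModEq.refl]⟩
  | succ t ih =>
    obtain ⟨ε, hε⟩ := ih
    obtain ⟨δ, hδ⟩ := Int.exists_unit_natAbs_two_mul_sub_modEq N (f^[t] a)
    refine ⟨δ * ε, ?_⟩
    rw [Function.iterate_succ_apply', hf]
    calc _ ≡ δ * (2 * f^[t] a) [ZMOD N] := hδ
      _ ≡ δ * (2 * (ε * 2 ^ t * a)) [ZMOD N] := (hε.mul_left 2).mul_left δ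
      _ = _ := by push_cast; ring

theorem two_pow_dvd_of_iterate_eq_self {k : ℕ} {f : ℕ → ℕ}
    (hf : ∀ a : ℕ, f a = (2 * (a : ℤ) - 2 ^ k).natAbs) {a t : ℕ} (ht : t ≠ 0)
    (hper : f^[t] a = a) : 2 ^ k ∣ a := by
  obtain ⟨ε, hε⟩ := exists_unit_iterate_modEq_two_pow_mul hf a t
  rw [hper, Int.modEq_iff_dvd] at hε
  have hodd : Odd ((ε : ℤ) * 2 ^ t - 1) :=
    ((even_two.pow_of_ne_zero ht).mul_left _).sub_odd odd_one
  have hcop : IsCoprime ((2 : ℤ) ^ k) (ε * 2 ^ t - 1) := (Int.isCoprime_two_left.mpr hodd).pow_left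
  have hdvd : (2 : ℤ) ^ k ∣ (ε * 2 ^ t - 1) * a := by
    convert hε using 1
    ring
  exact_mod_cast hcop.dvd_of_dvd_mul_left hdvd

theorem twoDigitKaprekar_power_of_two_general (m : ℕ)
    (hpow : ∃ k : ℕ, m + 1 = 2 ^ k)
    (h : ℕ → ℕ) (hh : ∀ a : ℕ, h a = (2 * (a : ℤ) - (m + 1)).natAbs) :
    ∀ a : ℕ, 1 ≤ a → a ≤ m → ∀ t : ℕ, 1 ≤ t → h^[t] a ≠ a := by
  obtain ⟨k, hk⟩ := hpow
  have hkZ : (m : ℤ) + 1 = 2 ^ k := by exact_mod_cast hk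
  have hf : ∀ a : ℕ, h a = (2 * (a : ℤ) - 2 ^ k).natAbs := fun a => by rw [hh, hkZ]
  intro a ha ham t ht hper
  have hdvd := two_pow_dvd_of_iterate_eq_self hf (by omega) hper
  have hle := Nat.le_of_dvd (by omega) hdvd
  omega

/-- For `m ≥ 2` with `m+1` a power of 2, with `h_m(a) = |2a - (m+1)|`: no
`1 ≤ a ≤ m` is periodic under `h_m`; the two-digit Kaprekar routine in base
`m` has only the trivial fixed point `0`. -/
theorem twoDigitKaprekar_power_of_two (m : ℕ) (hm : 2 ≤ m)
    (hpow : ∃ k : ℕ, m + 1 = 2 ^ k)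
    (h : ℕ → ℕ) (hh : ∀ a : ℕ, h a = (2 * (a : ℤ) - (m + 1)).natAbs) :
    ∀ a : ℕ, 1 ≤ a → a ≤ m → ∀ t : ℕ, 1 ≤ t → h^[t] a ≠ a :=
  twoDigitKaprekar_power_of_two_general m hpow h hh
end

section
/- Let m ≥ 2 be an integer, define h_m : ℕ → ℕ by h_m(a) = |2a − (m+1)|, and let r be the natural number with 2^r ∣ m+1 and 2^{r+1} ∤ m+1. Then for every integer a with 1 ≤ a ≤ m, there exists t ≤ r + 2 such that either h_m^[t](a) = 0 or (2^r ∣ h_m^[t](a) and 2^{r+1} ∤ h_m^[t](a)). In other words, every two-digit number in base m enters a fixed set of the Kaprekar routine within at most r + 2 iterations. -/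
/-!
Write `M = m + 1`, so `2 ^ r ∥ M`. If `2 ^ j ∣ a` with `j < r`, then `2 ^ (j + 1)` divides both
`2a` and `M`, hence `h a`; so after `r` steps the value is divisible by `2 ^ r`. If it is not yet
divisible by `2 ^ (r + 1)` we are done; otherwise `2 ^ (r + 2) ∣ 2a` while `2 ^ r ∥ M`, so one
more step gives `2 ^ r ∥ h a`. Thus `r + 1` steps always suffice, and `0` is never needed.
-/

namespace Int

theorem pow_succ_dvd_two_mul_sub {x M : ℤ} {j r : ℕ} (hM : 2 ^ r ∣ M) (hj : j < r)
    (hx : 2 ^ j ∣ x) : 2 ^ (j + 1) ∣ 2 * x - M :=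
  dvd_sub (pow_succ' (2 : ℤ) j ▸ mul_dvd_mul_left 2 hx) ((pow_dvd_pow 2 hj).trans hM)

theorem pow_dvd_two_mul_sub_of_pow_succ_dvd {x M : ℤ} {r : ℕ} (hM : 2 ^ r ∣ M)
    (hM' : ¬2 ^ (r + 1) ∣ M) (hx : 2 ^ (r + 1) ∣ x) :
    2 ^ r ∣ 2 * x - M ∧ ¬2 ^ (r + 1) ∣ 2 * x - M := by
  have h2x : 2 ^ (r + 1) ∣ 2 * x := hx.mul_left 2
  refine ⟨dvd_sub ((pow_dvd_pow 2 r.le_succ).trans h2x) hM, fun h => hM' ?_⟩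
  simpa using dvd_sub h2x h

end Int

def twoMulSubAbs (M a : ℕ) : ℕ := (2 * (a : ℤ) - M).natAbs

theorem pow_dvd_twoMulSubAbs_iff {M a j : ℕ} :
    2 ^ j ∣ twoMulSubAbs M a ↔ (2 : ℤ) ^ j ∣ 2 * a - M := by
  rw [twoMulSubAbs, ← Int.natCast_dvd, Nat.cast_pow, Nat.cast_ofNat]

theorem pow_dvd_iterate_twoMulSubAbs {M r j : ℕ} (hM : 2 ^ r ∣ M) (hj : j ≤ r) (a : ℕ) :
    2 ^ j ∣ (twoMulSubAbs M)^[j] a := by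
  induction j with
  | zero => exact one_dvd _
  | succ j ih =>
    rw [Function.iterate_succ_apply', pow_dvd_twoMulSubAbs_iff]
    exact Int.pow_succ_dvd_two_mul_sub (by exact_mod_cast hM) hj (by exact_mod_cast ih (by omega))

theorem exists_iterate_twoMulSubAbs_pow_dvd_not_pow_succ_dvd {M r : ℕ} (hM : 2 ^ r ∣ M)
    (hM' : ¬2 ^ (r + 1) ∣ M) (a : ℕ) :
    ∃ t ≤ r + 1, 2 ^ r ∣ (twoMulSubAbs M)^[t] a ∧ ¬2 ^ (r + 1) ∣ (twoMulSubAbs M)^[t] a := by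
  have hr := pow_dvd_iterate_twoMulSubAbs hM le_rfl a
  by_cases hr' : 2 ^ (r + 1) ∣ (twoMulSubAbs M)^[r] a
  · refine ⟨r + 1, le_rfl, ?_⟩
    simp only [Function.iterate_succ_apply', pow_dvd_twoMulSubAbs_iff]
    exact Int.pow_dvd_two_mul_sub_of_pow_succ_dvd (by exact_mod_cast hM)
      (by exact_mod_cast hM') (by exact_mod_cast hr')
  · exact ⟨r, r.le_succ, hr, hr'⟩

theorem twoDigitKaprekar_max_step_general (m r : ℕ)
    (hr : 2 ^ r ∣ m + 1 ∧ ¬2 ^ (r + 1) ∣ m + 1)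
    (h : ℕ → ℕ) (hh : ∀ a : ℕ, h a = (2 * (a : ℤ) - (m + 1)).natAbs) :
    ∀ a : ℕ, 1 ≤ a → a ≤ m →
      ∃ t : ℕ, t ≤ r + 2 ∧
        (h^[t] a = 0 ∨ (2 ^ r ∣ h^[t] a ∧ ¬2 ^ (r + 1) ∣ h^[t] a)) := by
  obtain rfl : h = twoMulSubAbs (m + 1) := funext fun a => by simp [hh, twoMulSubAbs]
  intro a _ _
  obtain ⟨t, ht, hexact⟩ := exists_iterate_twoMulSubAbs_pow_dvd_not_pow_succ_dvd hr.1 hr.2 a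
  exact ⟨t, by omega, Or.inr hexact⟩

/-- For `m ≥ 2` with `2^r ∥ m+1`, with `h_m(a) = |2a - (m+1)|`: every
`1 ≤ a ≤ m` reaches, within `r+2` iterations of `h_m`, either `0` or a value
with exactly `r` factors of 2, i.e. every two-digit number in base `m` enters
a fixed set of the Kaprekar routine within at most `r+2` iterations. -/
theorem twoDigitKaprekar_max_step (m r : ℕ) (hm : 2 ≤ m)
    (hr : 2 ^ r ∣ m + 1 ∧ ¬2 ^ (r + 1) ∣ m + 1)
    (h : ℕ → ℕ) (hh : ∀ a : ℕ, h a = (2 * (a : ℤ) - (m + 1)).natAbs) :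
    ∀ a : ℕ, 1 ≤ a → a ≤ m →
      ∃ t : ℕ, t ≤ r + 2 ∧
        (h^[t] a = 0 ∨ (2 ^ r ∣ h^[t] a ∧ ¬2 ^ (r + 1) ∣ h^[t] a)) :=
  twoDigitKaprekar_max_step_general m r hr h hh
end
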